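/- arXiv:1603.02399 — 4 statements merged into one kernel-verified Lean document; each statement's English description precedes it below -/
import Mathlib

section
/- For all t > 0, 2t(2 + cosh(2t)) - 3·sinh(2t) > 0. Consequently, the function H(t) = (n-1)coth²(t) - (1/sinh²(t))·(2 + (n-3)·t·coth(t)) is strictly increasing on (0,∞) for n ≥ 4 and strictly decreasing on (0,∞) for n = 2. -/
/-!
Since `coth² = 1 + 1/sinh²`, the function equals
`H(t) = (n - 1) + (n - 3) (sinh t - t cosh t) / sinh³ t`, whose derivative is
`(n - 3) g(2t) / (2 sinh⁴ t)` with `g(x) = x (2 + cosh x) - 3 sinh x`. The sign of `H'` is thus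
the sign of `n - 3`, because `g` vanishes at `0` together with `g'` and `g''`, while
`g'''(x) = x sinh x > 0` for `x > 0`.
-/

open Real Set

theorem pos_of_hasDerivAt_pos_of_eq_zero {f f' : ℝ → ℝ} (hf : ∀ x, HasDerivAt f (f' x) x)
    (hf₀ : f 0 = 0) (hf' : ∀ x, 0 < x → 0 < f' x) {x : ℝ} (hx : 0 < x) : 0 < f x := by
  have hmono : StrictMonoOn f (Ici 0) :=
    strictMonoOn_of_hasDerivWithinAt_pos (convex_Ici 0)
      (fun y _ => (hf y).continuousAt.continuousWithinAt) (fun y _ => (hf y).hasDerivWithinAt)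
      (fun y hy => hf' y (by simpa using hy))
  exact hf₀ ▸ hmono (mem_Ici.2 le_rfl) hx.le hx

namespace Real

variable {x : ℝ}

theorem sinh_lt_mul_cosh (hx : 0 < x) : sinh x < x * cosh x := by
  have hderiv (y : ℝ) : HasDerivAt (fun y => y * cosh y - sinh y) (y * sinh y) y :=
    ((hasDerivAt_id' y).mul (hasDerivAt_cosh y)).sub (hasDerivAt_sinh y) |>.congr_deriv (by ring)
  have := pos_of_hasDerivAt_pos_of_eq_zero hderiv (by simp)
    (fun y hy => mul_pos hy (sinh_pos_iff.2 hy)) hx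
  linarith

theorem two_mul_cosh_lt_two_add_mul_sinh (hx : 0 < x) : 2 * cosh x < 2 + x * sinh x := by
  have hderiv (y : ℝ) :
      HasDerivAt (fun y => 2 + y * sinh y - 2 * cosh y) (y * cosh y - sinh y) y :=
    (((hasDerivAt_id' y).mul (hasDerivAt_sinh y)).const_add 2).sub
      ((hasDerivAt_cosh y).const_mul 2) |>.congr_deriv (by ring)
  have := pos_of_hasDerivAt_pos_of_eq_zero hderiv (by simp)
    (fun y hy => sub_pos.2 (sinh_lt_mul_cosh hy)) hx
  linarith

theorem three_mul_sinh_lt_mul_two_add_cosh (hx : 0 < x) : 3 * sinh x < x * (2 + cosh x) := by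
  have hderiv (y : ℝ) :
      HasDerivAt (fun y => y * (2 + cosh y) - 3 * sinh y) (2 + y * sinh y - 2 * cosh y) y :=
    ((hasDerivAt_id' y).mul ((hasDerivAt_cosh y).const_add 2)).sub
      ((hasDerivAt_sinh y).const_mul 3) |>.congr_deriv (by ring)
  have := pos_of_hasDerivAt_pos_of_eq_zero hderiv (by simp)
    (fun y hy => sub_pos.2 (two_mul_cosh_lt_two_add_mul_sinh hy)) hx
  linarith

end Real

noncomputable def hyperbolicH (c t : ℝ) : ℝ :=
  (c - 1) * (cosh t / sinh t) ^ 2 - (1 / sinh t ^ 2) * (2 + (c - 3) * t * (cosh t / sinh t))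

section hyperbolicH

variable {c t : ℝ}

theorem hyperbolicH_eq (ht : t ≠ 0) :
    hyperbolicH c t = c - 1 + (c - 3) * (sinh t - t * cosh t) / sinh t ^ 3 := by
  have hs : sinh t ≠ 0 := sinh_ne_zero.2 ht
  unfold hyperbolicH
  field_simp
  linear_combination (c - 1) * sinh t * cosh_sq' t

theorem hasDerivAt_hyperbolicH (c : ℝ) (ht : t ≠ 0) :
    HasDerivAt (hyperbolicH c)
      ((c - 3) * (2 * t * (2 + cosh (2 * t)) - 3 * sinh (2 * t)) / (2 * sinh t ^ 4)) t := by
  have hs : sinh t ≠ 0 := sinh_ne_zero.2 ht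
  have hnum : HasDerivAt (fun t => sinh t - t * cosh t) (-(t * sinh t)) t :=
    (hasDerivAt_sinh t).sub ((hasDerivAt_id' t).mul (hasDerivAt_cosh t)) |>.congr_deriv (by ring)
  have hquot := ((hnum.fun_div ((hasDerivAt_sinh t).fun_pow 3) (pow_ne_zero 3 hs)).const_mul
    (c - 3)).const_add (c - 1)
  refine (hquot.congr_of_eventuallyEq ?_).congr_deriv ?_
  · filter_upwards [isOpen_ne.mem_nhds ht] with s hs using (hyperbolicH_eq hs).trans (by ring)
  · rw [cosh_two_mul, sinh_two_mul]
    field_simp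
    linear_combination 2 * (c - 3) * t * sinh t ^ 2 * cosh_sq' t

theorem continuousOn_hyperbolicH (c : ℝ) : ContinuousOn (hyperbolicH c) (Ioi 0) :=
  fun _ ht => (hasDerivAt_hyperbolicH c (ne_of_gt ht)).continuousAt.continuousWithinAt

theorem hyperbolicH_deriv_div_sub_three_pos (ht : 0 < t) :
    0 < (2 * t * (2 + cosh (2 * t)) - 3 * sinh (2 * t)) / (2 * sinh t ^ 4) := by
  have hg := three_mul_sinh_lt_mul_two_add_cosh (mul_pos two_pos ht)
  have hs := sinh_pos_iff.2 ht
  exact div_pos (sub_pos.2 hg) (by positivity)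

theorem strictMonoOn_hyperbolicH (hc : 3 < c) : StrictMonoOn (hyperbolicH c) (Ioi 0) :=
  strictMonoOn_of_hasDerivWithinAt_pos (convex_Ioi 0) (continuousOn_hyperbolicH c)
    (fun _ ht => (hasDerivAt_hyperbolicH c (ne_of_gt (interior_subset ht))).hasDerivWithinAt)
    fun _ ht => by
      rw [mul_div_assoc]
      exact mul_pos (sub_pos.2 hc) (hyperbolicH_deriv_div_sub_three_pos (interior_subset ht))

theorem strictAntiOn_hyperbolicH (hc : c < 3) : StrictAntiOn (hyperbolicH c) (Ioi 0) :=
  strictAntiOn_of_hasDerivWithinAt_neg (convex_Ioi 0) (continuousOn_hyperbolicH c)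
    (fun _ ht => (hasDerivAt_hyperbolicH c (ne_of_gt (interior_subset ht))).hasDerivWithinAt)
    fun _ ht => by
      rw [mul_div_assoc]
      exact mul_neg_of_neg_of_pos (sub_neg.2 hc)
        (hyperbolicH_deriv_div_sub_three_pos (interior_subset ht))

end hyperbolicH

/-- For `t > 0`, `2t(2+cosh 2t) - 3 sinh 2t > 0`; consequently
`H(t) = (n-1)coth²t - (2 + (n-3)t coth t)/sinh²t` is strictly increasing
on `(0,∞)` when `n ≥ 4` and strictly decreasing when `n = 2`. -/
theorem hyperbolic_H_monotonicity (n : ℕ)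
    (H : ℝ → ℝ)
    (hH : ∀ t : ℝ, H t = ((n : ℝ) - 1) * (Real.cosh t / Real.sinh t) ^ 2
      - (1 / Real.sinh t ^ 2) * (2 + ((n : ℝ) - 3) * t * (Real.cosh t / Real.sinh t))) :
    (∀ t : ℝ, 0 < t → 0 < 2 * t * (2 + Real.cosh (2 * t)) - 3 * Real.sinh (2 * t)) ∧
    (4 ≤ n → StrictMonoOn H (Set.Ioi (0 : ℝ))) ∧
    (n = 2 → StrictAntiOn H (Set.Ioi (0 : ℝ))) := by
  obtain rfl : H = hyperbolicH n := funext hH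
  refine ⟨fun t ht => sub_pos.2 (three_mul_sinh_lt_mul_two_add_cosh (by positivity)),
    fun hn => strictMonoOn_hyperbolicH ?_, fun hn => strictAntiOn_hyperbolicH ?_⟩
  · exact_mod_cast hn
  · norm_num [hn]
end

section
/- For all t with 0 < t < π, 2t(2 + cos(2t)) - 3·sin(2t) > 0; consequently H(t) = (n-1)cot²(t) - (1/sin²(t))·(2 + (n-3)·t·cot(t)) is strictly increasing on (0,π) for n ≥ 4 and strictly decreasing for n = 2. -/
/-!
The derivative of `2t(2 + cos 2t) - 3 sin 2t` is `8 sin t (sin t - t cos t)`, positive on `(0, π)`,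
and the function vanishes at `0`. By the double-angle formulas the same quantity is
`2 (t (1 + 2 cos² t) - 3 sin t cos t)`, and the derivative of `H` is `(n - 3)` times this
bracket divided by `sin⁴ t`.
-/

open Real Set

noncomputable def sphericalH (a t : ℝ) : ℝ :=
  (a - 1) * (cos t / sin t) ^ 2 - (1 / sin t ^ 2) * (2 + (a - 3) * t * (cos t / sin t))

lemma sin_sub_mul_cos_pos {t : ℝ} (h0 : 0 < t) (hπ : t < π) : 0 < sin t - t * cos t := by
  rcases lt_or_ge t (π / 2) with h | h
  · have hcos : 0 < cos t := cos_pos_of_mem_Ioo ⟨by linarith, h⟩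
    have htan : t < sin t / cos t := tan_eq_sin_div_cos t ▸ lt_tan h0 h
    linarith [(lt_div_iff₀ hcos).1 htan]
  · have hcos : cos t ≤ 0 := cos_nonpos_of_pi_div_two_le_of_le h (by linarith [pi_pos])
    nlinarith [sin_pos_of_pos_of_lt_pi h0 hπ]

lemma hasDerivAt_mul_two_add_cos_two_mul_sub_sin_two_mul (x : ℝ) :
    HasDerivAt (fun t => 2 * t * (2 + cos (2 * t)) - 3 * sin (2 * t))
      (8 * sin x * (sin x - x * cos x)) x := by
  have h2x : HasDerivAt (fun t : ℝ => 2 * t) 2 x := by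
    simpa using (hasDerivAt_id x).const_mul (2 : ℝ)
  have hcos := (hasDerivAt_cos (2 * x)).comp x h2x
  have hsin := (hasDerivAt_sin (2 * x)).comp x h2x
  refine ((h2x.mul (hcos.const_add 2)).sub (hsin.const_mul 3)).congr_deriv ?_
  rw [Function.comp_apply, cos_two_mul, sin_two_mul]
  linear_combination (-8) * sin_sq_add_cos_sq x

theorem mul_two_add_cos_two_mul_sub_sin_two_mul_pos {t : ℝ} (h0 : 0 < t) (hπ : t < π) :
    0 < 2 * t * (2 + cos (2 * t)) - 3 * sin (2 * t) := by
  have hmono : StrictMonoOn (fun t => 2 * t * (2 + cos (2 * t)) - 3 * sin (2 * t)) (Icc 0 π) := by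
    refine strictMonoOn_of_deriv_pos (convex_Icc 0 π)
      (fun x _ => (hasDerivAt_mul_two_add_cos_two_mul_sub_sin_two_mul x).continuousAt
        |>.continuousWithinAt) fun x hx => ?_
    rw [interior_Icc] at hx
    rw [(hasDerivAt_mul_two_add_cos_two_mul_sub_sin_two_mul x).deriv]
    have := sin_pos_of_pos_of_lt_pi hx.1 hx.2
    have := sin_sub_mul_cos_pos hx.1 hx.2
    positivity
  simpa using hmono ⟨le_rfl, pi_pos.le⟩ ⟨h0.le, hπ.le⟩ h0

lemma mul_one_add_two_mul_cos_sq_sub_pos {t : ℝ} (h0 : 0 < t) (hπ : t < π) :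
    0 < t * (1 + 2 * cos t ^ 2) - 3 * sin t * cos t := by
  have h := mul_two_add_cos_two_mul_sub_sin_two_mul_pos h0 hπ
  rw [cos_two_mul, sin_two_mul] at h
  linarith

lemma hasDerivAt_cos_div_sin {t : ℝ} (hs : sin t ≠ 0) :
    HasDerivAt (fun t => cos t / sin t) (-(1 / sin t ^ 2)) t := by
  refine ((hasDerivAt_cos t).div (hasDerivAt_sin t) hs).congr_deriv ?_
  field_simp
  linear_combination -sin_sq_add_cos_sq t

lemma hasDerivAt_sphericalH (a : ℝ) {t : ℝ} (hs : sin t ≠ 0) :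
    HasDerivAt (sphericalH a)
      ((a - 3) * (t * (1 + 2 * cos t ^ 2) - 3 * sin t * cos t) / sin t ^ 4) t := by
  have hcot := hasDerivAt_cos_div_sin hs
  have hcot_sq : HasDerivAt (fun t => (cos t / sin t) ^ 2)
      (2 * (cos t / sin t) ^ 1 * -(1 / sin t ^ 2)) t :=
    hcot.pow 2
  have hinv_sin_sq : HasDerivAt (fun t => 1 / sin t ^ 2)
      ((0 * sin t ^ 2 - 1 * (2 * sin t ^ 1 * cos t)) / (sin t ^ 2) ^ 2) t :=
    (hasDerivAt_const t (1 : ℝ)).div ((hasDerivAt_sin t).pow 2) (pow_ne_zero 2 hs)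
  have hlin : HasDerivAt (fun t => 2 + (a - 3) * t * (cos t / sin t))
      ((a - 3) * 1 * (cos t / sin t) + (a - 3) * t * -(1 / sin t ^ 2)) t :=
    (((hasDerivAt_id t).const_mul (a - 3)).mul hcot).const_add 2
  refine ((hcot_sq.const_mul (a - 1)).sub (hinv_sin_sq.mul hlin)).congr_deriv ?_
  field_simp
  ring

lemma deriv_sphericalH {a t : ℝ} (ht : t ∈ Ioo 0 π) :
    deriv (sphericalH a) t
      = (a - 3) * (t * (1 + 2 * cos t ^ 2) - 3 * sin t * cos t) / sin t ^ 4 :=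
  (hasDerivAt_sphericalH a (sin_pos_of_pos_of_lt_pi ht.1 ht.2).ne').deriv

lemma continuousOn_sphericalH (a : ℝ) : ContinuousOn (sphericalH a) (Ioo 0 π) := fun _ ht =>
  (hasDerivAt_sphericalH a (sin_pos_of_pos_of_lt_pi ht.1 ht.2).ne').continuousAt.continuousWithinAt

theorem strictMonoOn_sphericalH {a : ℝ} (ha : 3 < a) : StrictMonoOn (sphericalH a) (Ioo 0 π) := by
  refine strictMonoOn_of_deriv_pos (convex_Ioo 0 π) (continuousOn_sphericalH a) fun t ht => ?_
  rw [interior_Ioo] at ht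
  rw [deriv_sphericalH ht]
  have := sin_pos_of_pos_of_lt_pi ht.1 ht.2
  have := mul_one_add_two_mul_cos_sq_sub_pos ht.1 ht.2
  have : 0 < a - 3 := by linarith
  positivity

theorem strictAntiOn_sphericalH {a : ℝ} (ha : a < 3) : StrictAntiOn (sphericalH a) (Ioo 0 π) := by
  refine strictAntiOn_of_deriv_neg (convex_Ioo 0 π) (continuousOn_sphericalH a) fun t ht => ?_
  rw [interior_Ioo] at ht
  rw [deriv_sphericalH ht]
  have := sin_pos_of_pos_of_lt_pi ht.1 ht.2
  exact div_neg_of_neg_of_pos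
    (mul_neg_of_neg_of_pos (by linarith) (mul_one_add_two_mul_cos_sq_sub_pos ht.1 ht.2))
    (by positivity)

/-- For `0 < t < π`, `2t(2+cos 2t) - 3 sin 2t > 0`; consequently
`H(t) = (n-1)cot²t - (2 + (n-3)t cot t)/sin²t` is strictly increasing on `(0,π)`
for `n ≥ 4` and strictly decreasing for `n = 2`. -/
theorem spherical_H_monotonicity (n : ℕ)
    (H : ℝ → ℝ)
    (hH : ∀ t : ℝ, H t = ((n : ℝ) - 1) * (Real.cos t / Real.sin t) ^ 2
      - (1 / Real.sin t ^ 2) * (2 + ((n : ℝ) - 3) * t * (Real.cos t / Real.sin t))) :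
    (∀ t : ℝ, 0 < t → t < Real.pi →
      0 < 2 * t * (2 + Real.cos (2 * t)) - 3 * Real.sin (2 * t)) ∧
    (4 ≤ n → StrictMonoOn H (Set.Ioo (0 : ℝ) Real.pi)) ∧
    (n = 2 → StrictAntiOn H (Set.Ioo (0 : ℝ) Real.pi)) := by
  obtain rfl : H = sphericalH n := funext hH
  refine ⟨fun _ => mul_two_add_cos_two_mul_sub_sin_two_mul_pos, fun hn => ?_, fun hn => ?_⟩
  · exact strictMonoOn_sphericalH (by exact_mod_cast Nat.lt_of_succ_le hn)
  · exact strictAntiOn_sphericalH (by norm_num [hn])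
end

section
/- Let f : [0,π] → ℝ, f = sin on the 2-sphere (n = 2, R = π, A = -1). Then V(t) = 2π(1 - cos t) and as r → π⁻, G(r) := ∫₀ʳ V(s)²/V'(s) ds satisfies G(r) = B·ln(π - r) + C + O((π-r)²) for some constants B, C with B = V(π)²/(ω₁·A) = -8π (i.e. B = -V(π)²/(2π) with V(π) = 4π). -/
open Real Set intervalIntegral

/-! Writing `1 - cos s = 2 sin² (s/2)` and `sin s = 2 sin (s/2) cos (s/2)`, the integrand becomes
`4π sin³ (s/2) / cos (s/2)`, so `G r = -4π sin² (r/2) - 8π log cos (r/2)` on `(-π, π)`. With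
`r = π - 2u` this is `-4π cos² u - 8π log sin u`, and the logarithmic term splits off as
`-8π log (2u) + 8π log 2 - 8π log (sin u / u)`, where `log (sin u / u) = O(u²)`. -/

theorem abs_log_sin_div_self_le {u : ℝ} (hu0 : 0 < u) (hu : u ^ 2 ≤ 3) :
    |log (sin u / u)| ≤ u ^ 2 / 3 := by
  have hlower : 1 - u ^ 2 / 6 < sin u / u := by
    rw [lt_div_iff₀ hu0]; linarith [sin_gt_sub_cube hu0]
  have hq : 0 < sin u / u := by nlinarith
  have hupper : sin u / u ≤ 1 := (div_le_one hu0).2 (sin_le hu0.le)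
  -- `log q ≥ 1 - q⁻¹`, and `q⁻¹ ≤ 1 + u²/3` because `(1 - u²/6)(1 + u²/3) ≥ 1` when `u² ≤ 3`
  have hinv : (sin u / u)⁻¹ ≤ 1 + u ^ 2 / 3 := by
    rw [inv_le_iff_one_le_mul₀' hq]; nlinarith
  rw [abs_le]
  constructor
  · linarith [one_sub_inv_le_log_of_pos hq]
  · linarith [log_nonpos hq.le hupper, sq_nonneg u]

theorem sq_one_sub_cos_div_sin (s : ℝ) :
    (1 - cos s) ^ 2 / sin s = 2 * sin (s / 2) ^ 3 / cos (s / 2) := by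
  obtain ⟨θ, rfl⟩ : ∃ θ, s = 2 * θ := ⟨s / 2, by ring⟩
  have hcos : 1 - cos (2 * θ) = 2 * sin θ ^ 2 := by
    rw [cos_two_mul]; linarith [sin_sq_add_cos_sq θ]
  rw [hcos, sin_two_mul, mul_div_cancel_left₀ θ two_ne_zero]
  rcases eq_or_ne (sin θ) 0 with hs | hs
  · simp [hs]
  rcases eq_or_ne (cos θ) 0 with hc | hc
  · simp [hc]
  field_simp

theorem hasDerivAt_neg_two_sin_half_sq_sub_four_log_cos_half {r : ℝ} (hr : cos (r / 2) ≠ 0) :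
    HasDerivAt (fun t => -2 * sin (t / 2) ^ 2 - 4 * log (cos (t / 2)))
      (2 * sin (r / 2) ^ 3 / cos (r / 2)) r := by
  have hhalf : HasDerivAt (fun t : ℝ => t / 2) (1 / 2) r := (hasDerivAt_id r).div_const 2
  have h := ((hhalf.sin.pow 2).const_mul (-2)).sub ((hhalf.cos.log hr).const_mul 4)
  refine h.congr_deriv ?_
  field_simp
  linear_combination (-4 * sin (r / 2)) * sin_sq_add_cos_sq (r / 2)

theorem integral_sq_one_sub_cos_div_sin {r : ℝ} (hr : r ∈ Ioo (-π) π) :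
    ∫ s in (0 : ℝ)..r, (1 - cos s) ^ 2 / sin s = -2 * sin (r / 2) ^ 2 - 4 * log (cos (r / 2)) := by
  have hcos : ∀ s ∈ uIcc 0 r, 0 < cos (s / 2) := by
    intro s hs
    obtain ⟨h1, h2⟩ := ordConnected_Ioo.uIcc_subset ⟨by linarith [pi_pos], pi_pos⟩ hr hs
    exact cos_pos_of_mem_Ioo ⟨by linarith, by linarith⟩
  simp_rw [sq_one_sub_cos_div_sin]
  rw [integral_eq_sub_of_hasDerivAt
    (fun s hs => hasDerivAt_neg_two_sin_half_sq_sub_four_log_cos_half (hcos s hs).ne')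
    (ContinuousOn.intervalIntegrable (ContinuousOn.div (by fun_prop) (by fun_prop)
      fun s hs => (hcos s hs).ne'))]
  simp

theorem abs_integral_sq_one_sub_cos_div_sin_sub_log_le {r : ℝ} (h1 : π - 2 ≤ r) (h2 : r < π) :
    |(∫ s in (0 : ℝ)..r, (1 - cos s) ^ 2 / sin s) - (-4 * log (π - r) + 4 * log 2 - 2)|
      ≤ (π - r) ^ 2 := by
  obtain ⟨u, hu0, hu1, rfl⟩ : ∃ u, 0 < u ∧ u ≤ 1 ∧ r = π - 2 * u :=
    ⟨(π - r) / 2, by linarith, by linarith, by ring⟩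
  have hsin : 0 < sin u := sin_pos_of_pos_of_lt_pi hu0 (by linarith [pi_gt_three])
  have hhalf : (π - 2 * u) / 2 = π / 2 - u := by ring
  rw [integral_sq_one_sub_cos_div_sin ⟨by linarith [pi_gt_three], by linarith⟩, hhalf,
    sin_pi_div_two_sub, cos_pi_div_two_sub, sub_sub_cancel, log_mul two_ne_zero hu0.ne']
  have hrem : -2 * cos u ^ 2 - 4 * log (sin u) - (-4 * (log 2 + log u) + 4 * log 2 - 2)
      = 2 * sin u ^ 2 - 4 * log (sin u / u) := by
    rw [log_div hsin.ne' hu0.ne']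
    linear_combination -2 * sin_sq_add_cos_sq u
  rw [hrem]
  have hlog := abs_log_sin_div_self_le hu0 (by nlinarith)
  calc |2 * sin u ^ 2 - 4 * log (sin u / u)|
      ≤ 2 * sin u ^ 2 + 4 * |log (sin u / u)| := by
        rw [abs_le]
        constructor <;> nlinarith [neg_abs_le (log (sin u / u)), le_abs_self (log (sin u / u))]
    _ ≤ (2 * u) ^ 2 := by nlinarith [sin_sq_le_sq (x := u)]

/-- On the 2-sphere (`f = sin`, `n = 2`, `R = π`, `A = -1`): the volume function is
`V(t) = 2π(1 - cos t)`, and `G(r) = ∫₀ʳ V²/V'` satisfies, as `r → π⁻`,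
`G(r) = B ln(π - r) + C + O((π-r)²)` with `B = V(π)²/(ω₁ A) = -8π`. -/
theorem two_sphere_G_log_asymptotics
    (V : ℝ → ℝ) (hV : ∀ t : ℝ, V t = 2 * Real.pi * (1 - Real.cos t))
    (G : ℝ → ℝ)
    (hG : ∀ r : ℝ, G r = ∫ s in (0 : ℝ)..r, V s ^ 2 / (2 * Real.pi * Real.sin s)) :
    (∀ t : ℝ, 2 * Real.pi * (∫ s in (0 : ℝ)..t, Real.sin s) = V t) ∧
    V Real.pi = 4 * Real.pi ∧
    (-8 * Real.pi = V Real.pi ^ 2 / (2 * Real.pi * (-1))) ∧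
    (∃ C₀ : ℝ, ∃ C > (0 : ℝ), ∃ δ > (0 : ℝ), ∀ r : ℝ, Real.pi - δ < r → r < Real.pi →
      |G r - (-8 * Real.pi * Real.log (Real.pi - r) + C₀)| ≤ C * (Real.pi - r) ^ 2) := by
  have hVpi : V π = 4 * π := by rw [hV, cos_pi]; ring
  have hGr (r : ℝ) : G r = 2 * π * ∫ s in (0 : ℝ)..r, (1 - cos s) ^ 2 / sin s := by
    rw [hG, ← integral_const_mul]
    congr 1 with s
    rw [hV, mul_pow, sq (2 * π), mul_assoc, mul_div_mul_left _ _ two_pi_pos.ne', mul_div_assoc]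
  refine ⟨fun t => by rw [integral_sin, cos_zero, hV], hVpi,
    by rw [hVpi]; field_simp; ring, 4 * π * (2 * log 2 - 1), 2 * π, two_pi_pos, 2, two_pos,
    fun r h1 h2 => ?_⟩
  rw [hGr, show ∀ I L : ℝ, 2 * π * I - (-8 * π * L + 4 * π * (2 * log 2 - 1))
      = 2 * π * (I - (-4 * L + 4 * log 2 - 2)) by intros; ring, abs_mul, abs_of_pos two_pi_pos]
  exact mul_le_mul_of_nonneg_left (abs_integral_sq_one_sub_cos_div_sin_sub_log_le h1.le h2)
    two_pi_pos.le
end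

section
/- Let f : [0,R] → ℝ be continuous, positive on (0,R), with f(t) ~ t as t→0⁺ and f(t) ~ A(R-t) with A>0 as t→R⁻, and n ≥ 2. Let V(t) = ω_{n-1}∫₀ᵗ f^{n-1}. Let g be continuous on [0,R] with ∫₀ʳ f^{n-1}g = 0, and for 0 ≤ t ≤ r < R let u'(t) := f(t)^{-(n-1)}·∫ₜʳ f(s)^{n-1}g(s) ds. Then u' satisfies the uniform bound |u'(t)| ≤ (min{V(t), V(R) - V(t)}/V'(t))·‖g‖_{C[0,R]} ≤ C·‖g‖_{C[0,R]} with C independent of r and g. -/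
open Real Set intervalIntegral

private lemma model_int (k : ℕ) (c t : ℝ) :
    (∫ s in (0:ℝ)..t, (c * s) ^ k) = c ^ k * (t ^ (k + 1) / (k + 1)) := by
  simp_rw [mul_pow]
  rw [intervalIntegral.integral_const_mul, integral_pow]
  norm_num

/-- Key a priori estimate at maximal radius: with `V(t) = ω ∫₀ᵗ f^{n-1}` and
`u'(t) = f(t)^{-(n-1)} ∫ₜʳ f^{n-1} g` for `g` continuous with `∫₀ʳ f^{n-1} g = 0`,
one has the uniform bound
`|u'(t)| ≤ (min{V(t), V(R)-V(t)}/V'(t))·‖g‖_{C[0,R]} ≤ C‖g‖_{C[0,R]}`,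
with `C` independent of `r` and `g`. -/
theorem resolvent_uniform_bound (n : ℕ) (hn : 2 ≤ n) (R : ℝ) (hR : 0 < R)
    (ω : ℝ) (hω : 0 < ω) (A : ℝ) (hA : 0 < A)
    (f : ℝ → ℝ) (hf : ContinuousOn f (Set.Icc 0 R))
    (hfpos : ∀ t ∈ Set.Ioo (0 : ℝ) R, 0 < f t)
    (hf0 : Filter.Tendsto (fun t => f t / t) (nhdsWithin 0 (Set.Ioi (0 : ℝ))) (nhds 1))
    (hfR : Filter.Tendsto (fun t => f t / (A * (R - t))) (nhdsWithin R (Set.Iio R)) (nhds 1))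
    (V : ℝ → ℝ) (hV : ∀ t : ℝ, V t = ω * ∫ s in (0 : ℝ)..t, f s ^ (n - 1)) :
    ∃ C : ℝ, ∀ r : ℝ, 0 < r → r < R → ∀ g : ℝ → ℝ, ContinuousOn g (Set.Icc 0 R) →
      (∫ s in (0 : ℝ)..r, f s ^ (n - 1) * g s) = 0 →
      ∀ t : ℝ, 0 ≤ t → t ≤ r →
        |(∫ s in t..r, f s ^ (n - 1) * g s) / f t ^ (n - 1)|
            ≤ min (V t) (V R - V t) / (ω * f t ^ (n - 1))
              * sSup ((fun x => |g x|) '' Set.Icc 0 R) ∧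
        min (V t) (V R - V t) / (ω * f t ^ (n - 1))
            * sSup ((fun x => |g x|) '' Set.Icc 0 R)
          ≤ C * sSup ((fun x => |g x|) '' Set.Icc 0 R) := by
  have hnn : n - 1 + 1 = n := by omega
  have hne : n - 1 ≠ 0 := by omega
  have h0mem : (0:ℝ) ∈ Icc (0:ℝ) R := ⟨le_refl 0, hR.le⟩
  have hRmem : R ∈ Icc (0:ℝ) R := ⟨hR.le, le_refl R⟩
  -- f vanishes at the endpoints
  have hf0' : Filter.Tendsto f (nhdsWithin 0 (Set.Ioi (0:ℝ))) (nhds 0) := by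
    have h2 : Filter.Tendsto (fun t : ℝ => f t / t * t)
        (nhdsWithin 0 (Set.Ioi (0:ℝ))) (nhds 0) := by
      have := hf0.mul (Filter.tendsto_id.mono_left nhdsWithin_le_nhds)
      simpa using this
    refine h2.congr' ?_ |>.mono_left le_rfl
    filter_upwards [self_mem_nhdsWithin] with t ht
    exact div_mul_cancel₀ _ (ne_of_gt ht)
  have f0 : f 0 = 0 := by
    haveI := left_nhdsWithin_Ioo_neBot hR
    have hc : Filter.Tendsto f (nhdsWithin 0 (Set.Ioo (0:ℝ) R)) (nhds (f 0)) :=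
      (hf 0 h0mem).mono_left (nhdsWithin_mono _ Ioo_subset_Icc_self)
    exact tendsto_nhds_unique hc (hf0'.mono_left (nhdsWithin_mono _ Ioo_subset_Ioi_self))
  have hfR' : Filter.Tendsto f (nhdsWithin R (Set.Iio R)) (nhds 0) := by
    have h2 : Filter.Tendsto (fun t : ℝ => f t / (A * (R - t)) * (A * (R - t)))
        (nhdsWithin R (Set.Iio R)) (nhds 0) := by
      have hc : Filter.Tendsto (fun t : ℝ => A * (R - t)) (nhdsWithin R (Set.Iio R))
          (nhds (A * (R - R))) :=
        ((continuous_const.mul (continuous_const.sub continuous_id)).tendsto R).mono_left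
          nhdsWithin_le_nhds
      have := hfR.mul hc
      simpa using this
    refine h2.congr' ?_
    filter_upwards [self_mem_nhdsWithin] with t ht
    exact div_mul_cancel₀ _ (mul_pos hA (sub_pos.mpr (mem_Iio.mp ht))).ne'
  have fR : f R = 0 := by
    haveI := right_nhdsWithin_Ioo_neBot hR
    have hc : Filter.Tendsto f (nhdsWithin R (Set.Ioo (0:ℝ) R)) (nhds (f R)) :=
      (hf R hRmem).mono_left (nhdsWithin_mono _ Ioo_subset_Icc_self)
    exact tendsto_nhds_unique hc (hfR'.mono_left (nhdsWithin_mono _ Ioo_subset_Iio_self))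
  have hfnn : ∀ s ∈ Icc (0:ℝ) R, 0 ≤ f s := by
    rintro s ⟨hs0, hsR⟩
    rcases eq_or_lt_of_le hs0 with h | h
    · rw [← h, f0]
    rcases eq_or_lt_of_le hsR with h' | h'
    · rw [h', fR]
    · exact (hfpos s ⟨h, h'⟩).le
  have hFc : ContinuousOn (fun s => f s ^ (n - 1)) (Icc (0:ℝ) R) := hf.pow _
  have hFi : ∀ a b : ℝ, a ∈ Icc (0:ℝ) R → b ∈ Icc (0:ℝ) R →
      IntervalIntegrable (fun s => f s ^ (n - 1)) MeasureTheory.volume a b :=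
    fun a b ha hb => (hFc.mono (uIcc_subset_Icc ha hb)).intervalIntegrable
  have hV0 : V 0 = 0 := by rw [hV]; simp
  have hVd : ∀ a b : ℝ, a ∈ Icc (0:ℝ) R → b ∈ Icc (0:ℝ) R →
      V b - V a = ω * ∫ s in a..b, f s ^ (n - 1) := by
    intro a b ha hb
    rw [hV a, hV b, ← mul_sub]
    congr 1
    rw [← intervalIntegral.integral_add_adjacent_intervals (hFi 0 a h0mem ha) (hFi a b ha hb)]
    ring
  have hVnn : ∀ t ∈ Icc (0:ℝ) R, 0 ≤ V t := by
    intro t ht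
    rw [hV]
    exact mul_nonneg hω.le (intervalIntegral.integral_nonneg ht.1 fun s hs =>
      pow_nonneg (hfnn s ⟨hs.1, hs.2.trans ht.2⟩) _)
  have hVmono : ∀ a b : ℝ, a ∈ Icc (0:ℝ) R → b ∈ Icc (0:ℝ) R → a ≤ b → V a ≤ V b := by
    intro a b ha hb hab
    have h := hVd a b ha hb
    have h2 : 0 ≤ ω * ∫ s in a..b, f s ^ (n - 1) :=
      mul_nonneg hω.le (intervalIntegral.integral_nonneg hab fun s hs =>
        pow_nonneg (hfnn s ⟨ha.1.trans hs.1, hs.2.trans hb.2⟩) _)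
    linarith
  -- comparison with the linear model near the endpoints
  have hnear0 : ∃ δ > 0, ∀ s : ℝ, 0 < s → s < δ → s / 2 ≤ f s ∧ f s ≤ 3 / 2 * s := by
    have h := hf0 (Ioo_mem_nhds (by norm_num : (1:ℝ)/2 < 1) (by norm_num : (1:ℝ) < 3/2))
    rw [Filter.mem_map, Metric.mem_nhdsWithin_iff] at h
    obtain ⟨ε, hε, hsub⟩ := h
    refine ⟨ε, hε, fun s hs hsε => ?_⟩
    have hmem : s ∈ Metric.ball (0:ℝ) ε ∩ Ioi 0 :=
      ⟨by simpa [Real.dist_eq, abs_of_pos hs] using hsε, hs⟩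
    have h2 := hsub hmem
    constructor
    · have h3 := h2.1
      rw [lt_div_iff₀ hs] at h3; linarith
    · have h3 := h2.2
      rw [div_lt_iff₀ hs] at h3; linarith
  have hnearR : ∃ δ > 0, ∀ s : ℝ, R - δ < s → s < R →
      A * (R - s) / 2 ≤ f s ∧ f s ≤ 3 * A / 2 * (R - s) := by
    have h := hfR (Ioo_mem_nhds (by norm_num : (1:ℝ)/2 < 1) (by norm_num : (1:ℝ) < 3/2))
    rw [Filter.mem_map, Metric.mem_nhdsWithin_iff] at h
    obtain ⟨ε, hε, hsub⟩ := h
    refine ⟨ε, hε, fun s hs1 hs2 => ?_⟩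
    have hmem : s ∈ Metric.ball R ε ∩ Iio R :=
      ⟨by rw [Metric.mem_ball, Real.dist_eq, abs_of_neg (by linarith)]; linarith, hs2⟩
    have h2 := hsub hmem
    have hd : (0:ℝ) < A * (R - s) := by
      have : (0:ℝ) < R - s := by linarith
      positivity
    constructor
    · have h3 := h2.1
      rw [lt_div_iff₀ hd] at h3; nlinarith
    · have h3 := h2.2
      rw [div_lt_iff₀ hd] at h3; nlinarith
  obtain ⟨δ₁, hδ₁, hb0⟩ := hnear0
  obtain ⟨δ₂, hδ₂, hbR⟩ := hnearR
  -- the middle region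
  have hmid : ∃ C₂ : ℝ, 0 ≤ C₂ ∧ ∀ t ∈ Icc δ₁ (R - δ₂),
      min (V t) (V R - V t) / (ω * f t ^ (n - 1)) ≤ C₂ := by
    by_cases hab : δ₁ ≤ R - δ₂
    · have hsub : Icc δ₁ (R - δ₂) ⊆ Icc (0:ℝ) R := Icc_subset_Icc hδ₁.le (by linarith)
      obtain ⟨s₀, hs₀, hmin⟩ :=
        isCompact_Icc.exists_isMinOn (nonempty_Icc.mpr hab) (hf.mono hsub)
      have hm : 0 < f s₀ :=
        hfpos s₀ ⟨lt_of_lt_of_le hδ₁ hs₀.1, lt_of_le_of_lt hs₀.2 (by linarith)⟩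
      refine ⟨V R / (ω * f s₀ ^ (n - 1)),
        div_nonneg (hVnn R hRmem) (by positivity), fun t ht => ?_⟩
    
      have htm : t ∈ Icc (0:ℝ) R := hsub ht
      have hft : f s₀ ≤ f t := isMinOn_iff.mp hmin t ht
      have hpow : f s₀ ^ (n - 1) ≤ f t ^ (n - 1) := pow_le_pow_left₀ hm.le hft _
      have h1 : min (V t) (V R - V t) ≤ V R :=
        (min_le_right _ _).trans (by linarith [hVnn t htm])
      exact div_le_div₀ (hVnn R hRmem) h1 (by positivity)
        (mul_le_mul_of_nonneg_left hpow hω.le)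
    · exact ⟨0, le_refl 0, fun t ht => absurd (ht.1.trans ht.2) hab⟩
  obtain ⟨C₂, hC₂0, hC₂⟩ := hmid
  have hcast : ((n - 1 : ℕ) : ℝ) + 1 = (n : ℝ) := by exact_mod_cast hnn
  -- key uniform bound on the ratio
  have key : ∀ t ∈ Ico (0:ℝ) R,
      min (V t) (V R - V t) / (ω * f t ^ (n - 1)) ≤ max (3 ^ (n - 1) * R) C₂ := by
    rintro t ⟨ht0, htR⟩
    rcases eq_or_lt_of_le ht0 with h0 | h0
    · rw [← h0]
      have hz : min (V 0) (V R - V 0) = 0 := by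
        rw [hV0, sub_zero]; exact min_eq_left (hVnn R hRmem)
      rw [hz, zero_div]
      exact le_max_of_le_right hC₂0
    · have hftp : 0 < f t := hfpos t ⟨h0, htR⟩
      have hden : 0 < ω * f t ^ (n - 1) := by positivity
      have htmem : t ∈ Icc (0:ℝ) R := ⟨ht0, htR.le⟩
      rcases lt_or_ge t δ₁ with h1 | h1
      · -- region near 0
        refine le_trans ?_ (le_max_left _ _)
        rw [div_le_iff₀ hden]
        have hflb : t / 2 ≤ f t := (hb0 t h0 h1).1
        have hVt : V t ≤ ω * ((3/2) ^ (n - 1) * (t ^ (n - 1 + 1) / (((n - 1 : ℕ) : ℝ) + 1))) := by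
          rw [hV]
          refine mul_le_mul_of_nonneg_left ?_ hω.le
          have hmono : (∫ s in (0:ℝ)..t, f s ^ (n - 1))
              ≤ ∫ s in (0:ℝ)..t, ((3/2) * s) ^ (n - 1) := by
            refine intervalIntegral.integral_mono_on ht0 (hFi 0 t h0mem htmem)
              (Continuous.intervalIntegrable ((continuous_const.mul continuous_id).pow _) _ _) ?_
            intro s hs
            rcases eq_or_lt_of_le hs.1 with h | h
            · rw [← h, f0, zero_pow hne, mul_zero, zero_pow hne]
            · have hb := hb0 s h (lt_of_le_of_lt hs.2 h1)
              exact pow_le_pow_left₀ (hfnn s ⟨hs.1, hs.2.trans htR.le⟩)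
                (by linarith [hb.2]) _
          calc (∫ s in (0:ℝ)..t, f s ^ (n - 1))
              ≤ ∫ s in (0:ℝ)..t, ((3/2) * s) ^ (n - 1) := hmono
            _ = (3/2) ^ (n - 1) * (t ^ (n - 1 + 1) / (((n - 1 : ℕ) : ℝ) + 1)) := by
                rw [model_int]
        have hd1 : t ^ (n - 1 + 1) / (((n - 1 : ℕ) : ℝ) + 1) ≤ t ^ (n - 1) * R := by
          have hd : (1:ℝ) ≤ ((n - 1 : ℕ) : ℝ) + 1 := le_add_of_nonneg_left (Nat.cast_nonneg _)
          calc t ^ (n - 1 + 1) / (((n - 1 : ℕ) : ℝ) + 1)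
              ≤ t ^ (n - 1 + 1) / 1 :=
                div_le_div_of_nonneg_left (pow_nonneg ht0 _) one_pos hd
            _ = t ^ (n - 1) * t := by rw [div_one, pow_succ]
            _ ≤ t ^ (n - 1) * R := mul_le_mul_of_nonneg_left htR.le (pow_nonneg ht0 _)
        have e : (3:ℝ) ^ (n - 1) * (t / 2) ^ (n - 1) = (3/2) ^ (n - 1) * t ^ (n - 1) := by
          rw [div_pow, div_pow]; ring
        have hp2 : (t / 2) ^ (n - 1) ≤ f t ^ (n - 1) :=
          pow_le_pow_left₀ (by linarith) hflb _
        calc min (V t) (V R - V t) ≤ V t := min_le_left _ _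
          _ ≤ ω * ((3/2) ^ (n - 1) * (t ^ (n - 1 + 1) / (((n - 1 : ℕ) : ℝ) + 1))) := hVt
          _ ≤ ω * ((3/2) ^ (n - 1) * (t ^ (n - 1) * R)) := by
              refine mul_le_mul_of_nonneg_left (mul_le_mul_of_nonneg_left hd1 (by positivity))
                hω.le
          _ = 3 ^ (n - 1) * R * (ω * (t / 2) ^ (n - 1)) := by
              linear_combination (-(ω * R)) * e
          _ ≤ 3 ^ (n - 1) * R * (ω * f t ^ (n - 1)) := by
              refine mul_le_mul_of_nonneg_left (mul_le_mul_of_nonneg_left hp2 hω.le)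
                (by positivity)
      rcases le_or_gt t (R - δ₂) with h2 | h2
      · exact le_trans (hC₂ t ⟨h1, h2⟩) (le_max_right _ _)
      · -- region near R
        refine le_trans ?_ (le_max_left _ _)
        rw [div_le_iff₀ hden]
        have hflb : A * (R - t) / 2 ≤ f t := (hbR t h2 htR).1
        have hJ : (∫ s in t..R, ((3 * A / 2) * (R - s)) ^ (n - 1))
            = (3 * A / 2) ^ (n - 1) * ((R - t) ^ (n - 1 + 1) / (((n - 1 : ℕ) : ℝ) + 1)) := by
          rw [intervalIntegral.integral_comp_sub_left (fun x => ((3 * A / 2) * x) ^ (n - 1)) R]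
          rw [sub_self, model_int]
        have hVt : V R - V t
            ≤ ω * ((3 * A / 2) ^ (n - 1) * ((R - t) ^ (n - 1 + 1) / (((n - 1 : ℕ) : ℝ) + 1))) := by
          rw [hVd t R htmem hRmem]
          refine mul_le_mul_of_nonneg_left ?_ hω.le
          rw [← hJ]
          refine intervalIntegral.integral_mono_on htR.le (hFi t R htmem hRmem)
            (Continuous.intervalIntegrable
              ((continuous_const.mul (continuous_const.sub continuous_id)).pow _) _ _) ?_
          intro s hs
          rcases eq_or_lt_of_le hs.2 with h | h
          · rw [h, fR, zero_pow hne, sub_self, mul_zero, zero_pow hne]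
          · have hb := hbR s (lt_of_lt_of_le h2 hs.1) h
            exact pow_le_pow_left₀ (hfnn s ⟨ht0.trans hs.1, hs.2⟩) (by linarith [hb.2]) _
        have hd1 : (R - t) ^ (n - 1 + 1) / (((n - 1 : ℕ) : ℝ) + 1) ≤ (R - t) ^ (n - 1) * R := by
          have hd : (1:ℝ) ≤ ((n - 1 : ℕ) : ℝ) + 1 := le_add_of_nonneg_left (Nat.cast_nonneg _)
          have hRt : (0:ℝ) ≤ R - t := by linarith
          calc (R - t) ^ (n - 1 + 1) / (((n - 1 : ℕ) : ℝ) + 1)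
              ≤ (R - t) ^ (n - 1 + 1) / 1 :=
                div_le_div_of_nonneg_left (pow_nonneg hRt _) one_pos hd
            _ = (R - t) ^ (n - 1) * (R - t) := by rw [div_one, pow_succ]
            _ ≤ (R - t) ^ (n - 1) * R := mul_le_mul_of_nonneg_left (by linarith)
                (pow_nonneg hRt _)
        have e : (3:ℝ) ^ (n - 1) * (A * (R - t) / 2) ^ (n - 1)
            = (3 * A / 2) ^ (n - 1) * (R - t) ^ (n - 1) := by
          rw [div_pow, div_pow, mul_pow, mul_pow]; ring
        have hp2 : (A * (R - t) / 2) ^ (n - 1) ≤ f t ^ (n - 1) := by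
          have h3 : (0:ℝ) < R - t := by linarith
          exact pow_le_pow_left₀ (by positivity) hflb _
        calc min (V t) (V R - V t) ≤ V R - V t := min_le_right _ _
          _ ≤ ω * ((3 * A / 2) ^ (n - 1) * ((R - t) ^ (n - 1 + 1) / (((n - 1 : ℕ) : ℝ) + 1))) :=
              hVt
          _ ≤ ω * ((3 * A / 2) ^ (n - 1) * ((R - t) ^ (n - 1) * R)) := by
              refine mul_le_mul_of_nonneg_left (mul_le_mul_of_nonneg_left hd1 (by positivity))
                hω.le
          _ = 3 ^ (n - 1) * R * (ω * (A * (R - t) / 2) ^ (n - 1)) := by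
              linear_combination (-(ω * R)) * e
          _ ≤ 3 ^ (n - 1) * R * (ω * f t ^ (n - 1)) := by
              refine mul_le_mul_of_nonneg_left (mul_le_mul_of_nonneg_left hp2 hω.le)
                (by positivity)
  -- conclusion
  refine ⟨max (3 ^ (n - 1) * R) C₂, ?_⟩
  intro r hr hrR g hg hg0 t ht0 htr
  have htR : t < R := lt_of_le_of_lt htr hrR
  have htmem : t ∈ Icc (0:ℝ) R := ⟨ht0, htR.le⟩
  have hrmem : r ∈ Icc (0:ℝ) R := ⟨hr.le, hrR.le⟩
  set M := sSup ((fun x => |g x|) '' Set.Icc (0:ℝ) R) with hMdef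
  have hMb : ∀ x ∈ Icc (0:ℝ) R, |g x| ≤ M := by
    intro x hx
    exact le_csSup ((isCompact_Icc.image_of_continuousOn hg.abs).bddAbove)
      (mem_image_of_mem _ hx)
  have hM0 : 0 ≤ M := le_trans (abs_nonneg (g 0)) (hMb 0 h0mem)
  constructor
  · -- first inequality
    rcases eq_or_lt_of_le ht0 with h0 | h0
    · rw [← h0, hg0]
      have hz : min (V 0) (V R - V 0) = 0 := by
        rw [hV0, sub_zero]; exact min_eq_left (hVnn R hRmem)
      rw [hz]
      simp
    · have hft : 0 < f t := hfpos t ⟨h0, htR⟩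
      have hFt : (0:ℝ) < f t ^ (n - 1) := pow_pos hft _
      have hFgc : ContinuousOn (fun s => f s ^ (n - 1) * g s) (Icc (0:ℝ) R) := hFc.mul hg
      have hFgi : ∀ a b : ℝ, a ∈ Icc (0:ℝ) R → b ∈ Icc (0:ℝ) R →
          IntervalIntegrable (fun s => f s ^ (n - 1) * g s) MeasureTheory.volume a b :=
        fun a b ha hb => (hFgc.mono (uIcc_subset_Icc ha hb)).intervalIntegrable
      have habs : ∀ a b : ℝ, a ∈ Icc (0:ℝ) R → b ∈ Icc (0:ℝ) R → a ≤ b →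
          |∫ s in a..b, f s ^ (n - 1) * g s| ≤ (V b - V a) / ω * M := by
        intro a b ha hb hab'
        have h1 : |∫ s in a..b, f s ^ (n - 1) * g s|
            ≤ ∫ s in a..b, |f s ^ (n - 1) * g s| :=
          intervalIntegral.abs_integral_le_integral_abs hab'
        have h2 : (∫ s in a..b, |f s ^ (n - 1) * g s|)
            ≤ ∫ s in a..b, f s ^ (n - 1) * M := by
          refine intervalIntegral.integral_mono_on hab' ((hFgi a b ha hb).abs)
            ((hFi a b ha hb).mul_const M) ?_
          intro s hs
          have hsm : s ∈ Icc (0:ℝ) R := ⟨ha.1.trans hs.1, hs.2.trans hb.2⟩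
          rw [abs_mul, abs_of_nonneg (pow_nonneg (hfnn s hsm) _)]
          exact mul_le_mul_of_nonneg_left (hMb s hsm) (pow_nonneg (hfnn s hsm) _)
        have h3 : (∫ s in a..b, f s ^ (n - 1) * M) = (V b - V a) / ω * M := by
          rw [intervalIntegral.integral_mul_const, hVd a b ha hb]
          field_simp
        calc |∫ s in a..b, f s ^ (n - 1) * g s|
            ≤ ∫ s in a..b, |f s ^ (n - 1) * g s| := h1
          _ ≤ ∫ s in a..b, f s ^ (n - 1) * M := h2
          _ = (V b - V a) / ω * M := h3
      have hb1 : |∫ s in t..r, f s ^ (n - 1) * g s| ≤ (V R - V t) / ω * M := by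
        refine le_trans (habs t r htmem hrmem htr) ?_
        have : V r ≤ V R := hVmono r R hrmem hRmem hrR.le
        gcongr
      have hb2 : |∫ s in t..r, f s ^ (n - 1) * g s| ≤ V t / ω * M := by
        have hsplit : (∫ s in (0:ℝ)..t, f s ^ (n - 1) * g s)
            + ∫ s in t..r, f s ^ (n - 1) * g s = ∫ s in (0:ℝ)..r, f s ^ (n - 1) * g s :=
          intervalIntegral.integral_add_adjacent_intervals (hFgi 0 t h0mem htmem)
            (hFgi t r htmem hrmem)
        rw [hg0] at hsplit
        have heq : (∫ s in t..r, f s ^ (n - 1) * g s)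
            = -(∫ s in (0:ℝ)..t, f s ^ (n - 1) * g s) := by linarith
        rw [heq, abs_neg]
        have := habs 0 t h0mem htmem ht0
        rwa [hV0, sub_zero] at this
      have hmin : |∫ s in t..r, f s ^ (n - 1) * g s|
          ≤ min (V t) (V R - V t) / ω * M := by
        rw [← min_div_div_right hω.le, min_mul_of_nonneg _ _ hM0]
        exact le_min hb2 hb1
      have hre : min (V t) (V R - V t) / (ω * f t ^ (n - 1)) * M
          = (min (V t) (V R - V t) / ω * M) / f t ^ (n - 1) := by
        field_simp
      rw [hre, abs_div, abs_of_pos hFt]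
      gcongr
  · exact mul_le_mul_of_nonneg_right (key t ⟨ht0, htR⟩) hM0
end
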